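/- arXiv:2206.05976 — 6 statements merged into one kernel-verified Lean document; each statement's English description precedes it below -/
import Mathlib

section
/- (Global solutions recovery, forward direction.) Suppose (x̄, r̄) ∈ ℝ^n × ℝ^J with r̄ ≥ 0 is a global optimal solution of the reformulated bilevel problem, i.e., x̄ ∈ S_c(r̄) and L(x̄) ≤ L(x) for every (x,r) ∈ ℝ^n × ℝ^J with r ≥ 0 and x ∈ S_c(r). If λ̄ ∈ M(x̄, r̄), then (x̄, λ̄) is a global optimal solution of the original bilevel problem, i.e., λ̄ ≥ 0, x̄ ∈ S_p(λ̄), and L(x̄) ≤ L(x) for every (x,λ) ∈ ℝ^n × ℝ^J with λ ≥ 0 and x ∈ S_p(λ). -/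
open scoped InnerProductSpace
open Filter Topology

noncomputable section

/-- Euclidean space `ℝ^m`. -/
abbrev Eu (m : ℕ) : Type := EuclideanSpace ℝ (Fin m)

/-- Subgradient set (in the sense of convex analysis) of `f` at `x`. -/
def Subgrad {E : Type*} [NormedAddCommGroup E] [InnerProductSpace ℝ E]
    (f : E → ℝ) (x : E) : Set E :=
  {g | ∀ y, f x + ⟪g, y - x⟫_ℝ ≤ f y}

/-- Feasible region `F(r) = {x : P_i(x) ≤ r_i, i = 1,…,J}`. -/
def Feas {n J : ℕ} (P : Fin J → Eu n → ℝ) (r : Eu J) : Set (Eu n) :=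
  {x | ∀ i, P i x ≤ r i}

/-- `S_p(λ)`: global minimizers of `x' ↦ l(x') + Σ_i λ_i P_i(x')`. -/
def Sp {n J : ℕ} (l : Eu n → ℝ) (P : Fin J → Eu n → ℝ) (lam : Eu J) : Set (Eu n) :=
  {x | ∀ x', l x + ∑ i, lam i * P i x ≤ l x' + ∑ i, lam i * P i x'}

/-- `S_c(r)`: global minimizers of `l` over `F(r)`. -/
def Sc {n J : ℕ} (l : Eu n → ℝ) (P : Fin J → Eu n → ℝ) (r : Eu J) : Set (Eu n) :=
  {x | x ∈ Feas P r ∧ ∀ x' ∈ Feas P r, l x ≤ l x'}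

/-- The multiplier set `M(x,r)`. -/
def Mset {n J : ℕ} (l : Eu n → ℝ) (P : Fin J → Eu n → ℝ) (x : Eu n) (r : Eu J) :
    Set (Eu J) :=
  {lam | (∀ i, 0 ≤ lam i) ∧
    (∃ u ∈ Subgrad l x, ∃ v : Fin J → Eu n,
      (∀ i, v i ∈ Subgrad (P i) x) ∧ u + ∑ i, lam i • v i = 0) ∧
    (∀ i, lam i * (P i x - r i) = 0)}

theorem stmt2 {n J : ℕ} (hn : 1 ≤ n) (hJ : 1 ≤ J)
    (l : Eu n → ℝ) (P : Fin J → Eu n → ℝ)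
    (hlcv : ConvexOn ℝ Set.univ l) (hlc : Continuous l)
    (hPcv : ∀ i, ConvexOn ℝ Set.univ (P i)) (hPc : ∀ i, Continuous (P i))
    (hPnn : ∀ i x, 0 ≤ P i x)
    (L : Eu n → ℝ) (hLcv : ConvexOn ℝ Set.univ L) (hLc : Continuous L)
    (xb : Eu n) (rb : Eu J) (hrb : ∀ i, 0 ≤ rb i)
    (hfeas : xb ∈ Sc l P rb)
    (hopt : ∀ (x : Eu n) (r : Eu J), (∀ i, 0 ≤ r i) → x ∈ Sc l P r → L xb ≤ L x)
    (lamb : Eu J) (hlamb : lamb ∈ Mset l P xb rb) :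
    (∀ i, 0 ≤ lamb i) ∧ xb ∈ Sp l P lamb ∧
      ∀ (x : Eu n) (lam : Eu J), (∀ i, 0 ≤ lam i) → x ∈ Sp l P lam → L xb ≤ L x := by
  obtain ⟨hnn, ⟨u, hu, v, hv, hsum⟩, hcomp⟩ := hlamb
  refine ⟨hnn, ?_, ?_⟩
  · intro x'
    have h1 : l xb + ⟪u, x' - xb⟫_ℝ ≤ l x' := hu x'
    have h2 : ∀ i, lamb i * (P i xb + ⟪v i, x' - xb⟫_ℝ) ≤ lamb i * P i x' :=
      fun i => mul_le_mul_of_nonneg_left (hv i x') (hnn i)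
    have hz : ⟪u + ∑ i, lamb i • v i, x' - xb⟫_ℝ = 0 := by rw [hsum]; simp
    have hz' : ⟪u, x' - xb⟫_ℝ + ∑ i, lamb i * ⟪v i, x' - xb⟫_ℝ = 0 := by
      rw [← hz, inner_add_left, sum_inner]
      simp [real_inner_smul_left, Finset.mul_sum, mul_assoc]
    have h3 : ∑ i, lamb i * (P i xb + ⟪v i, x' - xb⟫_ℝ) ≤ ∑ i, lamb i * P i x' :=
      Finset.sum_le_sum (fun i _ => h2 i)
    simp only [mul_add] at h3
    rw [Finset.sum_add_distrib] at h3
    linarith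
  · intro x lam hlam hx
    refine hopt x (WithLp.toLp 2 (fun i => P i x)) (fun i => hPnn i x) ⟨fun i => le_refl _, ?_⟩
    intro x' hx'
    have h4 := hx x'
    have hsum2 : ∑ i, lam i * P i x' ≤ ∑ i, lam i * P i x :=
      Finset.sum_le_sum (fun i _ => mul_le_mul_of_nonneg_left (hx' i) (hlam i))
    linarith
end
end

section
/- (Local solution recovery I.) Suppose (x̄, r̄) with r̄ ≥ 0 is a local optimal solution of the reformulated bilevel problem, i.e., x̄ ∈ S_c(r̄) and there exists ε₀ > 0 such that L(x̄) ≤ L(x) whenever r ≥ 0, x ∈ S_c(r), and ‖(x,r) − (x̄,r̄)‖ ≤ ε₀. Assume moreover that r̄ = P(x̄) and that λ̄ ∈ M(x̄, r̄). Then (x̄, λ̄) is a local optimal solution of the original bilevel problem, i.e., λ̄ ≥ 0, x̄ ∈ S_p(λ̄), and there exists ε > 0 such that L(x̄) ≤ L(x) whenever λ ≥ 0, x ∈ S_p(λ), and ‖(x,λ) − (x̄,λ̄)‖ ≤ ε. -/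
open scoped InnerProductSpace
open Filter Topology

noncomputable section

theorem stmt4 {n J : ℕ} (hn : 1 ≤ n) (hJ : 1 ≤ J)
    (l : Eu n → ℝ) (P : Fin J → Eu n → ℝ)
    (hlcv : ConvexOn ℝ Set.univ l) (hlc : Continuous l)
    (hPcv : ∀ i, ConvexOn ℝ Set.univ (P i)) (hPc : ∀ i, Continuous (P i))
    (hPnn : ∀ i x, 0 ≤ P i x)
    (L : Eu n → ℝ) (hLcv : ConvexOn ℝ Set.univ L) (hLc : Continuous L)
    (xb : Eu n) (rb : Eu J) (hrb : ∀ i, 0 ≤ rb i)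
    (hxb : xb ∈ Sc l P rb)
    (hloc : ∃ ε₀ > (0 : ℝ), ∀ (x : Eu n) (r : Eu J), (∀ i, 0 ≤ r i) → x ∈ Sc l P r →
      Real.sqrt (‖x - xb‖ ^ 2 + ‖r - rb‖ ^ 2) ≤ ε₀ → L xb ≤ L x)
    (hrbP : ∀ i, rb i = P i xb)
    (lamb : Eu J) (hlamb : lamb ∈ Mset l P xb rb) :
    (∀ i, 0 ≤ lamb i) ∧ xb ∈ Sp l P lamb ∧
      ∃ ε > (0 : ℝ), ∀ (x : Eu n) (lam : Eu J), (∀ i, 0 ≤ lam i) → x ∈ Sp l P lam →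
        Real.sqrt (‖x - xb‖ ^ 2 + ‖lam - lamb‖ ^ 2) ≤ ε → L xb ≤ L x := by
  obtain ⟨hlam_nn, ⟨u, hu, v, hv, hsum⟩, hcomp⟩ := hlamb
  have hSp : xb ∈ Sp l P lamb := by
    intro x'
    have h1 : l xb + ⟪u, x' - xb⟫_ℝ ≤ l x' := hu x'
    have h2 : ∀ i, lamb i * P i xb + lamb i * ⟪v i, x' - xb⟫_ℝ ≤ lamb i * P i x' := by
      intro i
      have h := mul_le_mul_of_nonneg_left (hv i x') (hlam_nn i)
      nlinarith
    have hzero : ⟪u, x' - xb⟫_ℝ + ∑ i, lamb i * ⟪v i, x' - xb⟫_ℝ = 0 := by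
      have h : ⟪u + ∑ i, lamb i • v i, x' - xb⟫_ℝ = 0 := by rw [hsum]; simp
      rw [inner_add_left, sum_inner] at h
      simp only [real_inner_smul_left] at h
      exact h
    have hsum2 := Finset.sum_le_sum (fun i (_ : i ∈ Finset.univ) => h2 i)
    rw [Finset.sum_add_distrib] at hsum2
    linarith
  refine ⟨hlam_nn, hSp, ?_⟩
  obtain ⟨ε₀, hε₀, hloc⟩ := hloc
  set gP : Eu n → Eu J := fun x => (WithLp.equiv 2 (Fin J → ℝ)).symm (fun i => P i x) with hgP
  have hPv : Continuous gP := by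
    exact (PiLp.continuous_toLp 2 (fun _ : Fin J => ℝ)).comp
      (continuous_pi fun i => hPc i)
  have hca : ContinuousAt gP xb := hPv.continuousAt
  rw [Metric.continuousAt_iff] at hca
  obtain ⟨δ, hδ, hδ2⟩ := hca (ε₀ / 2) (by linarith)
  refine ⟨min (δ / 2) (ε₀ / 2), lt_min (by linarith) (by linarith), ?_⟩
  intro x lam hlamnn hxSp hdist
  set Px : Eu J := gP x with hPx
  have hxnorm : ‖x - xb‖ ≤ min (δ / 2) (ε₀ / 2) := by
    refine le_trans ?_ hdist
    have h1 : ‖x - xb‖ ^ 2 ≤ ‖x - xb‖ ^ 2 + ‖lam - lamb‖ ^ 2 := by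
      have := sq_nonneg ‖lam - lamb‖
      linarith
    calc ‖x - xb‖ = Real.sqrt (‖x - xb‖ ^ 2) := (Real.sqrt_sq (norm_nonneg _)).symm
      _ ≤ _ := Real.sqrt_le_sqrt h1
  have hPclose : ‖Px - rb‖ < ε₀ / 2 := by
    have hd : dist x xb < δ := by
      rw [dist_eq_norm]
      have := le_min_iff.mp hxnorm
      linarith [this.1]
    have := hδ2 hd
    rw [dist_eq_norm] at this
    have hrbeq : rb = gP xb := by
      ext i
      exact hrbP i
    rw [hrbeq]
    exact this
  have hxSc : x ∈ Sc l P Px := by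
    constructor
    · intro i
      exact le_refl _
    · intro x' hx'
      have h := hxSp x'
      have h2 : ∑ i, lam i * P i x' ≤ ∑ i, lam i * P i x := by
        apply Finset.sum_le_sum
        intro i _
        exact mul_le_mul_of_nonneg_left (hx' i) (hlamnn i)
      linarith
  apply hloc x Px (fun i => hPnn i x) hxSc
  have ha : ‖x - xb‖ ≤ ε₀ / 2 := le_trans hxnorm (min_le_right _ _)
  have hb : ‖Px - rb‖ ≤ ε₀ / 2 := le_of_lt hPclose
  have hkey : ‖x - xb‖ ^ 2 + ‖Px - rb‖ ^ 2 ≤ (‖x - xb‖ + ‖Px - rb‖) ^ 2 := by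
    nlinarith [norm_nonneg (x - xb), norm_nonneg (Px - rb)]
  calc Real.sqrt (‖x - xb‖ ^ 2 + ‖Px - rb‖ ^ 2)
      ≤ Real.sqrt ((‖x - xb‖ + ‖Px - rb‖) ^ 2) := Real.sqrt_le_sqrt hkey
    _ = ‖x - xb‖ + ‖Px - rb‖ := Real.sqrt_sq (by positivity)
    _ ≤ ε₀ := by linarith
end
end

section
/- (Local solution recovery II, first part.) Suppose there exists a set D ⊆ ℝ^n × ℝ^J_+ (where ℝ^J_+ := {r ∈ ℝ^J : r ≥ 0}) that is dense in ℝ^n × ℝ^J_+ and such that M(x,r) ≠ ∅ for every (x,r) ∈ D. Let (x̄, λ̄) with λ̄ ≥ 0 be an optimal solution of the original bilevel problem locally with respect to x and globally with respect to λ, i.e., x̄ ∈ S_p(λ̄) and there exists ε₀ > 0 such that L(x̄) ≤ L(x) whenever λ ≥ 0, x ∈ S_p(λ), and ‖x − x̄‖ ≤ ε₀. Then (x̄, r̄) with r̄ := P(x̄) is an optimal solution of the reformulated bilevel problem locally with respect to x and globally with respect to r, i.e., x̄ ∈ S_c(r̄) and there exists ε > 0 such that L(x̄) ≤ L(x) whenever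 r ≥ 0, x ∈ S_c(r), and ‖x − x̄‖ ≤ ε. -/
/-!
A multiplier in `M(x, r)` makes `0` a subgradient of the penalized objective
`l + Σ λᵢ Pᵢ` at `x`, so `x ∈ S_p(λ)`. Hence the first coordinates of the points of `D`
are lower-level solutions, and near `x̄` they satisfy `L x̄ ≤ L`. Since `D` is dense in
`ℝⁿ × ℝᴶ₊`, these coordinates are dense in `ℝⁿ`, and by continuity `L x̄ ≤ L` on a whole
ball around `x̄`, in particular at every nearby point of any `S_c(r)`.
That `x̄ ∈ S_c(P(x̄))` is the usual penalty argument: on `F(P(x̄))` the penalty is at most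
its value at `x̄`.
-/

open scoped InnerProductSpace
open Filter Topology

noncomputable section

section Subgrad

variable {E : Type*} [NormedAddCommGroup E] [InnerProductSpace ℝ E]

theorem Subgrad.add_mem {f g : E → ℝ} {x u v : E} (hu : u ∈ Subgrad f x)
    (hv : v ∈ Subgrad g x) : u + v ∈ Subgrad (fun y => f y + g y) x := fun y => by
  have := hu y
  have := hv y
  rw [inner_add_left]
  linarith

theorem Subgrad.sum_smul_mem {ι : Type*} (s : Finset ι) {c : ι → ℝ} (hc : ∀ i, 0 ≤ c i)
    {f : ι → E → ℝ} {g : ι → E} {x : E} (hg : ∀ i, g i ∈ Subgrad (f i) x) :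
    ∑ i ∈ s, c i • g i ∈ Subgrad (fun y => ∑ i ∈ s, c i * f i y) x := fun y => by
  have hterm : ∀ i ∈ s, c i * f i x + ⟪c i • g i, y - x⟫_ℝ ≤ c i * f i y := fun i _ => by
    rw [real_inner_smul_left, ← mul_add]
    exact mul_le_mul_of_nonneg_left (hg i y) (hc i)
  simpa only [sum_inner, ← Finset.sum_add_distrib] using Finset.sum_le_sum hterm

theorem Subgrad.le_of_zero_mem {f : E → ℝ} {x : E} (h : 0 ∈ Subgrad f x) (y : E) :
    f x ≤ f y := by
  simpa using h y

end Subgrad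

section Reformulation

variable {n J : ℕ} {l : Eu n → ℝ} {P : Fin J → Eu n → ℝ}

theorem mem_Sp_of_mem_Mset {x : Eu n} {r lam : Eu J} (h : lam ∈ Mset l P x r) :
    x ∈ Sp l P lam := by
  obtain ⟨hlam, ⟨u, hu, v, hv, hzero⟩, -⟩ := h
  have h0 := Subgrad.add_mem hu (Subgrad.sum_smul_mem Finset.univ hlam hv)
  rw [hzero] at h0
  exact Subgrad.le_of_zero_mem h0

theorem mem_Sc_of_mem_Sp {x : Eu n} {lam r : Eu J} (hlam : ∀ i, 0 ≤ lam i)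
    (hx : x ∈ Sp l P lam) (hr : ∀ i, r i = P i x) : x ∈ Sc l P r := by
  refine ⟨fun i => (hr i).ge, fun x' hx' => ?_⟩
  have hpen : ∑ i, lam i * P i x' ≤ ∑ i, lam i * P i x :=
    Finset.sum_le_sum fun i _ => mul_le_mul_of_nonneg_left ((hx' i).trans (hr i).le) (hlam i)
  linarith [hx x']

end Reformulation

theorem Continuous.le_on_inter_closure {X : Type*} [TopologicalSpace X] {L : X → ℝ}
    (hL : Continuous L) {a : ℝ} {S U : Set X} (hU : IsOpen U) (h : ∀ y ∈ U ∩ S, a ≤ L y) :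
    ∀ y ∈ U ∩ closure S, a ≤ L y := fun _ hy =>
  closure_minimal h (isClosed_le continuous_const hL) (hU.inter_closure hy)

theorem stmt5_general {n J : ℕ}
    (l : Eu n → ℝ) (P : Fin J → Eu n → ℝ)
    (L : Eu n → ℝ) (hLc : Continuous L)
    (D : Set (Eu n × Eu J))
    (hDdense : {p : Eu n × Eu J | ∀ i, 0 ≤ p.2 i} ⊆ closure D)
    (hDM : ∀ p ∈ D, (Mset l P p.1 p.2).Nonempty)
    (xb : Eu n) (lamb : Eu J) (hlamb : ∀ i, 0 ≤ lamb i)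
    (hxb : xb ∈ Sp l P lamb)
    (hloc : ∃ ε₀ > (0 : ℝ), ∀ (x : Eu n) (lam : Eu J), (∀ i, 0 ≤ lam i) →
      x ∈ Sp l P lam → ‖x - xb‖ ≤ ε₀ → L xb ≤ L x)
    (rb : Eu J) (hrb : ∀ i, rb i = P i xb) :
    xb ∈ Sc l P rb ∧
      ∃ ε > (0 : ℝ), ∀ (x : Eu n) (r : Eu J), (∀ i, 0 ≤ r i) → x ∈ Sc l P r →
        ‖x - xb‖ ≤ ε → L xb ≤ L x := by
  refine ⟨mem_Sc_of_mem_Sp hlamb hxb hrb, ?_⟩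
  obtain ⟨ε₀, hε₀, hL⟩ := hloc
  have hD : ∀ y ∈ Metric.ball xb ε₀ ∩ Prod.fst '' D, L xb ≤ L y := by
    rintro _ ⟨hy, q, hqD, rfl⟩
    obtain ⟨lam, hlam⟩ := hDM q hqD
    exact hL q.1 lam hlam.1 (mem_Sp_of_mem_Mset hlam) (mem_ball_iff_norm.mp hy).le
  refine ⟨ε₀ / 2, by positivity, fun x r hr _ hx => ?_⟩
  have hxD : x ∈ closure (Prod.fst '' D) :=
    image_closure_subset_closure_image continuous_fst ⟨(x, r), hDdense hr, rfl⟩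
  exact hLc.le_on_inter_closure Metric.isOpen_ball hD x
    ⟨mem_ball_iff_norm.mpr (by linarith), hxD⟩

theorem stmt5 {n J : ℕ} (hn : 1 ≤ n) (hJ : 1 ≤ J)
    (l : Eu n → ℝ) (P : Fin J → Eu n → ℝ)
    (hlcv : ConvexOn ℝ Set.univ l) (hlc : Continuous l)
    (hPcv : ∀ i, ConvexOn ℝ Set.univ (P i)) (hPc : ∀ i, Continuous (P i))
    (hPnn : ∀ i x, 0 ≤ P i x)
    (L : Eu n → ℝ) (hLcv : ConvexOn ℝ Set.univ L) (hLc : Continuous L)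
    (D : Set (Eu n × Eu J))
    (hDsub : D ⊆ {p : Eu n × Eu J | ∀ i, 0 ≤ p.2 i})
    (hDdense : {p : Eu n × Eu J | ∀ i, 0 ≤ p.2 i} ⊆ closure D)
    (hDM : ∀ p ∈ D, (Mset l P p.1 p.2).Nonempty)
    (xb : Eu n) (lamb : Eu J) (hlamb : ∀ i, 0 ≤ lamb i)
    (hxb : xb ∈ Sp l P lamb)
    (hloc : ∃ ε₀ > (0 : ℝ), ∀ (x : Eu n) (lam : Eu J), (∀ i, 0 ≤ lam i) →
      x ∈ Sp l P lam → ‖x - xb‖ ≤ ε₀ → L xb ≤ L x)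
    (rb : Eu J) (hrb : ∀ i, rb i = P i xb) :
    xb ∈ Sc l P rb ∧
      ∃ ε > (0 : ℝ), ∀ (x : Eu n) (r : Eu J), (∀ i, 0 ≤ r i) → x ∈ Sc l P r →
        ‖x - xb‖ ≤ ε → L xb ≤ L x :=
  stmt5_general l P L hLc D hDdense hDM xb lamb hlamb hxb hloc rb hrb
end
end

section
/- (Uniformized Kurdyka–Łojasiewicz property.) Let σ : ℝ^d → ℝ ∪ {+∞} be proper and lower semicontinuous, let C ⊆ ℝ^d be a nonempty compact set on which σ is constant with value μ, and suppose σ satisfies the KL property at each point of C. Then there exist ε > 0, η ∈ (0,+∞], and φ ∈ Φ_η such that for every ȳ ∈ C and every y ∈ ℝ^d with dist(y, C) < ε and μ < σ(y) < μ + η, one has φ'(σ(y) − μ) · dist(0, ∂σ(y)) ≥ 1. -/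
open scoped InnerProductSpace
open Filter Topology

noncomputable section

/-- Fréchet subdifferential of `σ : ℝ^d → ℝ ∪ {+∞}` at `y`: the set of `v` with
`liminf_{u → y, u ≠ y} (σ(u) − σ(y) − ⟨v, u − y⟩)/‖u − y‖ ≥ 0` (empty if `σ y = +∞`). -/
def FSubdiff {d : ℕ} (σ : Eu d → EReal) (y : Eu d) : Set (Eu d) :=
  {v | σ y ≠ ⊤ ∧ ∀ ε : ℝ, 0 < ε → ∀ᶠ u in 𝓝[≠] y,
      (((σ y).toReal + ⟪v, u - y⟫_ℝ - ε * ‖u - y‖ : ℝ) : EReal) ≤ σ u}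

/-- Limiting (Mordukhovich) subdifferential of `σ` at `y`. -/
def LSubdiff {d : ℕ} (σ : Eu d → EReal) (y : Eu d) : Set (Eu d) :=
  {v | ∃ (ys : ℕ → Eu d) (vs : ℕ → Eu d),
        Tendsto ys atTop (𝓝 y) ∧
        Tendsto (fun k => σ (ys k)) atTop (𝓝 (σ y)) ∧
        (∀ k, vs k ∈ FSubdiff σ (ys k)) ∧
        Tendsto vs atTop (𝓝 v)}

/-- The class `Φ_η` of desingularizing functions on `[0, η)` (with `η ∈ (0, +∞]`). -/
structure IsPhiEta (η : EReal) (φ : ℝ → ℝ) : Prop where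
  concave : ConcaveOn ℝ {s : ℝ | 0 ≤ s ∧ (s : EReal) < η} φ
  cont : ContinuousOn φ {s : ℝ | 0 ≤ s ∧ (s : EReal) < η}
  zero : φ 0 = 0
  diff : ∀ s : ℝ, 0 < s → (s : EReal) < η → DifferentiableAt ℝ φ s
  derivCont : ContinuousOn (deriv φ) {s : ℝ | 0 < s ∧ (s : EReal) < η}
  derivPos : ∀ s : ℝ, 0 < s → (s : EReal) < η → 0 < deriv φ s

/-- The Kurdyka–Łojasiewicz property of `σ` at `ybar`; the inequality
`φ'(σ(y) − σ(ybar)) · dist(0, ∂σ(y)) ≥ 1` is expressed as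
`φ'(σ(y) − σ(ybar)) · ‖v‖ ≥ 1` for all `v ∈ ∂σ(y)`. -/
def KLAt {d : ℕ} (σ : Eu d → EReal) (ybar : Eu d) : Prop :=
  ∃ (η : EReal) (φ : ℝ → ℝ) (Y : Set (Eu d)), 0 < η ∧ IsPhiEta η φ ∧ Y ∈ 𝓝 ybar ∧
    ∀ y ∈ Y, σ ybar < σ y → σ y < σ ybar + η →
      ∀ v ∈ LSubdiff σ y, 1 ≤ deriv φ ((σ y - σ ybar).toReal) * ‖v‖

lemma concaveOn_finset_sum {ι : Type*} (t : Finset ι) {S : Set ℝ} (hS : Convex ℝ S)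
    (f : ι → ℝ → ℝ) (hf : ∀ i ∈ t, ConcaveOn ℝ S (f i)) :
    ConcaveOn ℝ S (fun x => ∑ i ∈ t, f i x) := by
  classical
  induction t using Finset.induction with
  | empty => simpa using concaveOn_const 0 hS
  | @insert a s hx ih =>
    simp only [Finset.sum_insert hx]
    exact (hf a (Finset.mem_insert_self a s)).add
      (ih fun i hi => hf i (Finset.mem_insert_of_mem hi))

theorem stmt10 {d : ℕ} (hd : 1 ≤ d)
    (σ : Eu d → EReal)
    (hproper : ∃ y, σ y ≠ ⊤) (hnobot : ∀ y, σ y ≠ ⊥)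
    (hlsc : LowerSemicontinuous σ)
    (C : Set (Eu d)) (hCne : C.Nonempty) (hCcp : IsCompact C)
    (μ : ℝ) (hconst : ∀ y ∈ C, σ y = (μ : EReal))
    (hKL : ∀ y ∈ C, KLAt σ y) :
    ∃ (ε : ℝ) (η : EReal) (φ : ℝ → ℝ), 0 < ε ∧ 0 < η ∧ IsPhiEta η φ ∧
      ∀ ybar ∈ C, ∀ y : Eu d, Metric.infDist y C < ε →
        (μ : EReal) < σ y → σ y < (μ : EReal) + η →
        ∀ v ∈ LSubdiff σ y, 1 ≤ deriv φ ((σ y).toReal - μ) * ‖v‖ := by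
  classical
  choose! ηf φf Yf hη hφ hY hineq using hKL
  -- cover C by interiors of the Y's
  obtain ⟨t, htC, htcov⟩ := hCcp.elim_nhds_subcover (fun x => interior (Yf x))
    (fun x hx => interior_mem_nhds.2 (hY x hx))
  have htne : t.Nonempty := by
    rcases hCne with ⟨c, hc⟩
    rcases Set.mem_iUnion₂.1 (htcov hc) with ⟨i, hi, _⟩
    exact ⟨i, hi⟩
  -- Lebesgue-type number
  have hopen : IsOpen (⋃ x ∈ t, interior (Yf x)) :=
    isOpen_biUnion fun _ _ => isOpen_interior
  obtain ⟨ε, hε, hthick⟩ := hCcp.exists_thickening_subset_open hopen htcov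
  -- a common real η
  set r : Eu d → ℝ := fun x => if ηf x = ⊤ then 1 else (ηf x).toReal with hr
  have hrpos : ∀ x ∈ t, 0 < r x := by
    intro x hx
    by_cases h : ηf x = ⊤
    · simp [hr, h]
    · simp only [hr, h, if_false]
      have h2 : ((0:ℝ) : EReal) < ((ηf x).toReal : EReal) := by
        rw [EReal.coe_toReal h (ne_bot_of_gt (hη x (htC x hx)))]
        exact hη x (htC x hx)
      exact_mod_cast h2
  have hrle : ∀ x ∈ t, (r x : EReal) ≤ ηf x := by
    intro x hx
    by_cases h : ηf x = ⊤
    · simp [h]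
    · simp only [hr, h, if_false]
      rw [EReal.coe_toReal h (ne_bot_of_gt (hη x (htC x hx)))]
  set η0 : ℝ := t.inf' htne r with hη0
  have hη0pos : 0 < η0 := by
    rw [hη0, Finset.lt_inf'_iff]
    exact hrpos
  have hη0le : ∀ x ∈ t, (η0 : EReal) ≤ ηf x := by
    intro x hx
    exact le_trans (EReal.coe_le_coe_iff.2 (Finset.inf'_le r hx)) (hrle x hx)
  -- define φ as the sum
  set Φ : ℝ → ℝ := fun s => ∑ x ∈ t, φf x s with hΦ
  have hSsub : ∀ x ∈ t, {s : ℝ | 0 ≤ s ∧ (s : EReal) < (η0 : EReal)} ⊆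
      {s : ℝ | 0 ≤ s ∧ (s : EReal) < ηf x} := by
    intro x hx s hs
    exact ⟨hs.1, lt_of_lt_of_le hs.2 (hη0le x hx)⟩
  have hOsub : ∀ x ∈ t, {s : ℝ | 0 < s ∧ (s : EReal) < (η0 : EReal)} ⊆
      {s : ℝ | 0 < s ∧ (s : EReal) < ηf x} := by
    intro x hx s hs
    exact ⟨hs.1, lt_of_lt_of_le hs.2 (hη0le x hx)⟩
  have hSeq : {s : ℝ | 0 ≤ s ∧ (s : EReal) < (η0 : EReal)} = Set.Ico 0 η0 := by
    ext s; simp [Set.mem_Ico, EReal.coe_lt_coe_iff]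
  have hSconv : Convex ℝ {s : ℝ | 0 ≤ s ∧ (s : EReal) < (η0 : EReal)} := by
    rw [hSeq]; exact convex_Ico 0 η0
  have hdiffall : ∀ s : ℝ, 0 < s → (s : EReal) < (η0 : EReal) →
      ∀ x ∈ t, DifferentiableAt ℝ (φf x) s := fun s hs hs' x hx =>
    (hφ x (htC x hx)).diff s hs (lt_of_lt_of_le hs' (hη0le x hx))
  have hderiv : ∀ s : ℝ, 0 < s → (s : EReal) < (η0 : EReal) →
      deriv Φ s = ∑ x ∈ t, deriv (φf x) s := fun s hs hs' =>
    deriv_fun_sum (hdiffall s hs hs')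
  have hΦeta : IsPhiEta (η0 : EReal) Φ := by
    constructor
    · exact concaveOn_finset_sum t hSconv _ fun x hx =>
        ((hφ x (htC x hx)).concave).subset (hSsub x hx) hSconv
    · exact continuousOn_finset_sum t fun x hx =>
        ((hφ x (htC x hx)).cont).mono (hSsub x hx)
    · exact Finset.sum_eq_zero fun x hx => (hφ x (htC x hx)).zero
    · intro s hs hs'
      exact DifferentiableAt.fun_sum (hdiffall s hs hs')
    · refine ContinuousOn.congr (continuousOn_finset_sum t
        (fun x hx => ((hφ x (htC x hx)).derivCont).mono (hOsub x hx))) ?_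
      intro s hs
      exact hderiv s hs.1 hs.2
    · intro s hs hs'
      rw [hderiv s hs hs']
      exact Finset.sum_pos (fun x hx => (hφ x (htC x hx)).derivPos s hs
        (lt_of_lt_of_le hs' (hη0le x hx))) htne
  refine ⟨ε, (η0 : EReal), Φ, hε, by exact_mod_cast hη0pos, hΦeta, ?_⟩
  intro ybar hybar y hdist hlo hhi v hv
  -- locate y in some Y x
  have hyU : y ∈ ⋃ x ∈ t, interior (Yf x) :=
    hthick ((Metric.mem_thickening_iff_infDist_lt hCne).2 hdist)
  rcases Set.mem_iUnion₂.1 hyU with ⟨x, hxt, hyx⟩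
  have hxC : x ∈ C := htC x hxt
  have hσx : σ x = (μ : EReal) := hconst x hxC
  -- finiteness of σ y
  have hytop : σ y ≠ ⊤ := by
    intro h
    rw [h] at hhi
    exact absurd hhi (by simp [← EReal.coe_add, lt_top_iff_ne_top])
  have hybot : σ y ≠ ⊥ := hnobot y
  have hcoe : ((σ y).toReal : EReal) = σ y := EReal.coe_toReal hytop hybot
  -- real bounds
  have hlo' : μ < (σ y).toReal := by
    rw [← EReal.coe_lt_coe_iff, hcoe]; exact hlo
  have hhi' : (σ y).toReal < μ + η0 := by
    rw [← EReal.coe_lt_coe_iff, hcoe, EReal.coe_add]; exact hhi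
  set s0 : ℝ := (σ y).toReal - μ with hs0
  have hs0pos : 0 < s0 := by rw [hs0]; linarith
  have hs0lt : (s0 : EReal) < (η0 : EReal) := by
    rw [EReal.coe_lt_coe_iff, hs0]; linarith
  -- apply the KL inequality at x
  have h1 : 1 ≤ deriv (φf x) ((σ y - σ x).toReal) * ‖v‖ := by
    refine hineq x hxC y (interior_subset hyx) ?_ ?_ v hv
    · rw [hσx]; exact hlo
    · rw [hσx]
      calc σ y < (μ : EReal) + (η0 : EReal) := hhi
        _ ≤ (μ : EReal) + ηf x := add_le_add le_rfl (hη0le x hxt)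
  have hsub : (σ y - σ x).toReal = s0 := by
    rw [hσx, EReal.toReal_sub hytop hybot (EReal.coe_ne_top μ) (EReal.coe_ne_bot μ)]
    simp [hs0]
  rw [hsub] at h1
  -- compare derivatives
  have hle : deriv (φf x) s0 ≤ deriv Φ s0 := by
    rw [hderiv s0 hs0pos hs0lt]
    exact Finset.single_le_sum (fun i hi => le_of_lt ((hφ i (htC i hi)).derivPos s0 hs0pos
      (lt_of_lt_of_le hs0lt (hη0le i hi)))) hxt
  calc (1 : ℝ) ≤ deriv (φf x) s0 * ‖v‖ := h1
    _ ≤ deriv Φ s0 * ‖v‖ := mul_le_mul_of_nonneg_right hle (norm_nonneg v)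
end
end

section
/- (Abstract KL convergence argument.) Fix an integer N ≥ 1, and let {z^k}_{k ≥ 0} ⊆ ℝ^N. Let ρ > 0, ᾱ ≥ 0, Ē ∈ ℝ, η ∈ (0,+∞], and {E_k}_{k ≥ 0} ⊆ ℝ. Let φ : [0,η) → [0,+∞) be concave and continuous with φ(0) = 0, continuously differentiable on (0,η) with φ'(s) > 0 for all s ∈ (0,η). Assume: (i) E_k ≥ E_{k+1} + (ρ/4)‖z^{k+1} − z^k‖² for all k ≥ 0; (ii) Ē < E_k < Ē + η for all k ≥ 0; (iii) there exists k₀ ≥ 2 such that for every k ≥ k₀, φ'(E_k − Ē) · ((√2/2)ρ‖z^{k−1} − z^{k−2}‖ + (ᾱ + ρ)‖z^k − z^{k−1}‖) ≥ 1. Then Σ_{k=0}^∞ ‖z^{k+1} − z^k‖ < +∞; in particular {z^k} is a Cauchy sequence and converges to some point of ℝ^N. -/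
open Filter Topology

noncomputable section
set_option maxHeartbeats 1000000

theorem stmt12 {N : ℕ} (hN : 1 ≤ N)
    (z : ℕ → EuclideanSpace ℝ (Fin N))
    (ρ alphaBar Ebar : ℝ) (hρ : 0 < ρ) (hα : 0 ≤ alphaBar)
    (η : EReal) (hη : 0 < η)
    (E : ℕ → ℝ)
    (φ : ℝ → ℝ)
    (hφcc : ConcaveOn ℝ {s : ℝ | 0 ≤ s ∧ (s : EReal) < η} φ)
    (hφct : ContinuousOn φ {s : ℝ | 0 ≤ s ∧ (s : EReal) < η})
    (hφ0 : φ 0 = 0)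
    (hφdiff : ∀ s : ℝ, 0 < s → (s : EReal) < η → DifferentiableAt ℝ φ s)
    (hφdc : ContinuousOn (deriv φ) {s : ℝ | 0 < s ∧ (s : EReal) < η})
    (hφd : ∀ s : ℝ, 0 < s → (s : EReal) < η → 0 < deriv φ s)
    (hdec : ∀ k, E (k + 1) + ρ / 4 * ‖z (k + 1) - z k‖ ^ 2 ≤ E k)
    (hband : ∀ k, Ebar < E k ∧ ((E k - Ebar : ℝ) : EReal) < η)
    (hKL : ∃ k₀ : ℕ, 2 ≤ k₀ ∧ ∀ k, k₀ ≤ k →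
      1 ≤ deriv φ (E k - Ebar) *
        (Real.sqrt 2 / 2 * ρ * ‖z (k - 1) - z (k - 2)‖ +
          (alphaBar + ρ) * ‖z k - z (k - 1)‖)) :
    Summable (fun k => ‖z (k + 1) - z k‖) ∧ CauchySeq z ∧
      ∃ w, Tendsto z atTop (𝓝 w) := by
  classical
  obtain ⟨k₀, hk₀2, hKL⟩ := hKL
  set Sset : Set ℝ := {s : ℝ | 0 ≤ s ∧ (s : EReal) < η} with hSset
  set d : ℕ → ℝ := fun k => ‖z (k + 1) - z k‖ with hd
  clear_value d
  have hd0 : ∀ k, 0 ≤ d k := by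
    intro k; simp only [hd]; exact norm_nonneg _
  set x : ℕ → ℝ := fun k => E k - Ebar with hx
  clear_value x
  have hx0 : ∀ k, 0 < x k := by
    intro k; simp only [hx]; exact sub_pos.2 (hband k).1
  have hxη : ∀ k, ((x k : ℝ) : EReal) < η := by
    intro k; simp only [hx]; exact (hband k).2
  have hxS : ∀ k, x k ∈ Sset := fun k => ⟨(hx0 k).le, hxη k⟩
  have hdecx : ∀ k, ρ / 4 * d k ^ 2 ≤ x k - x (k + 1) := by
    intro k
    have h := hdec k
    simp only [hx, hd]
    linarith
  set a : ℕ → ℝ := fun k => φ (x k) with ha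
  clear_value a
  have ha0 : ∀ k, 0 ≤ a k := by
    intro k
    have hsub : Set.Icc (0:ℝ) (x k) ⊆ Sset := by
      intro y hy
      refine ⟨hy.1, lt_of_le_of_lt ?_ (hxη k)⟩
      exact_mod_cast EReal.coe_le_coe_iff.mpr hy.2
    have hmono : StrictMonoOn φ (Set.Icc (0:ℝ) (x k)) := by
      apply strictMonoOn_of_deriv_pos (convex_Icc _ _) (hφct.mono hsub)
      intro y hy
      rw [interior_Icc] at hy
      exact hφd y hy.1 (lt_of_le_of_lt (EReal.coe_le_coe_iff.mpr hy.2.le) (hxη k))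
    have h := hmono (Set.left_mem_Icc.mpr (hx0 k).le)
      (Set.right_mem_Icc.mpr (hx0 k).le) (hx0 k)
    rw [hφ0] at h
    simp only [ha]
    exact h.le
  have hD : ∀ k, 0 < deriv φ (x k) := fun k => hφd _ (hx0 k) (hxη k)
  -- concavity step
  have key : ∀ k, deriv φ (x k) * (ρ / 4 * d k ^ 2) ≤ a k - a (k + 1) := by
    intro k
    have hq4 : (0:ℝ) ≤ ρ / 4 * d k ^ 2 := by positivity
    have hxle : x (k + 1) ≤ x k := by linarith [hdecx k]
    rcases eq_or_lt_of_le hxle with heq | hlt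
    · have h0 : ρ / 4 * d k ^ 2 ≤ 0 := by
        have := hdecx k
        rw [heq] at this
        linarith
      have h2 : d k ^ 2 = 0 := by nlinarith [sq_nonneg (d k)]
      simp only [ha, heq, h2, sub_self, mul_zero]
      linarith
    · have hconv : ConvexOn ℝ Sset (-φ) := hφcc.neg
      have hdiff : DifferentiableAt ℝ (-φ) (x k) := (hφdiff _ (hx0 k) (hxη k)).neg
      have hs := hconv.slope_le_deriv (hxS (k+1)) (hxS k) hlt hdiff
      have hdneg : deriv (-φ) (x k) = - deriv φ (x k) := by
        show deriv (fun y => -φ y) (x k) = - deriv φ (x k)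
        rw [deriv.fun_neg]
      rw [slope_def_field, hdneg] at hs
      have hpos : 0 < x k - x (k + 1) := sub_pos.2 hlt
      rw [div_le_iff₀ hpos] at hs
      simp only [Pi.neg_apply] at hs
      have hmul := mul_le_mul_of_nonneg_left (hdecx k) (hD k).le
      simp only [ha]
      nlinarith [hs, hmul]
  -- constants
  set c₁ : ℝ := Real.sqrt 2 / 2 * ρ with hc₁
  clear_value c₁
  set c₂ : ℝ := alphaBar + ρ with hc₂
  clear_value c₂
  have hc₁0 : 0 < c₁ := by
    have h2 : (0:ℝ) < Real.sqrt 2 := Real.sqrt_pos.mpr (by norm_num)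
    rw [hc₁]
    positivity
  have hc₂0 : 0 < c₂ := by rw [hc₂]; linarith
  set c : ℝ := c₁ + c₂ with hcc
  clear_value c
  have hc0 : 0 < c := by rw [hcc]; linarith
  set p : ℝ := c₁ / (2 * c) with hp
  clear_value p
  set q : ℝ := c₂ / (2 * c) with hq
  clear_value q
  have hp0 : 0 ≤ p := by
    rw [hp]; exact div_nonneg hc₁0.le (by linarith)
  have hq0 : 0 ≤ q := by
    rw [hq]; exact div_nonneg hc₂0.le (by linarith)
  have hpq : p + q = 1 / 2 := by
    rw [hp, hq, hcc]
    have hne : c₁ + c₂ ≠ 0 := by linarith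
    field_simp
  -- KL inequality rewritten
  have hKL' : ∀ k, k₀ ≤ k → 1 ≤ deriv φ (x k) * (c₁ * d (k - 2) + c₂ * d (k - 1)) := by
    intro k hk
    have e1 : d (k - 2) = ‖z (k - 1) - z (k - 2)‖ := by
      have h1 : k - 2 + 1 = k - 1 := by omega
      simp only [hd]
      rw [h1]
    have e2 : d (k - 1) = ‖z k - z (k - 1)‖ := by
      have h2 : k - 1 + 1 = k := by omega
      simp only [hd]
      rw [h2]
    have h := hKL k hk
    rw [e1, e2]
    simp only [hx]
    exact h
  -- per-step inequality
  have keysum : ∀ k, k₀ ≤ k →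
      d k ≤ 2 * c / ρ * (a k - a (k + 1)) + (p * d (k - 2) + q * d (k - 1)) := by
    intro k hk
    have hSk0 : 0 ≤ c₁ * d (k - 2) + c₂ * d (k - 1) :=
      add_nonneg (mul_nonneg hc₁0.le (hd0 _)) (mul_nonneg hc₂0.le (hd0 _))
    have hP : (0:ℝ) ≤ ρ / 4 * d k ^ 2 := by positivity
    have hΔ0 : 0 ≤ a k - a (k + 1) := by
      have h1 := key k
      have h2 : 0 ≤ deriv φ (x k) * (ρ / 4 * d k ^ 2) := mul_nonneg (hD k).le hP
      linarith
    have hdS : ρ / 4 * d k ^ 2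
        ≤ (a k - a (k + 1)) * (c₁ * d (k - 2) + c₂ * d (k - 1)) := by
      have h1 := key k
      have h2 := hKL' k hk
      have s1 := mul_le_mul_of_nonneg_left h2 hP
      have s2 := mul_le_mul_of_nonneg_right h1 hSk0
      nlinarith [s1, s2]
    -- AM-GM
    set u : ℝ := 2 * c / ρ * (a k - a (k + 1)) with hu
    clear_value u
    set v : ℝ := p * d (k - 2) + q * d (k - 1) with hv
    clear_value v
    have hu0 : 0 ≤ u := by
      rw [hu]
      exact mul_nonneg (div_nonneg (by linarith) hρ.le) hΔ0
    have hv0 : 0 ≤ v := by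
      rw [hv]
      exact add_nonneg (mul_nonneg hp0 (hd0 _)) (mul_nonneg hq0 (hd0 _))
    have hvS : v = (c₁ * d (k - 2) + c₂ * d (k - 1)) / (2 * c) := by
      rw [hv, hp, hq]
      ring
    have h4uv : d k ^ 2 ≤ (u + v) ^ 2 := by
      have hne : (c:ℝ) ≠ 0 := ne_of_gt hc0
      have hμ : u * v
          = (a k - a (k + 1)) * (c₁ * d (k - 2) + c₂ * d (k - 1)) / ρ := by
        rw [hu, hvS]
        field_simp
      have s4 : d k ^ 2 ≤ 4 * (u * v) := by
        rw [hμ, ← mul_div_assoc, le_div_iff₀ hρ]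
        nlinarith [hdS]
      nlinarith [sq_nonneg (u - v), s4]
    have := (pow_le_pow_iff_left₀ (hd0 k) (by linarith : (0:ℝ) ≤ u + v) (two_ne_zero)).mp h4uv
    linarith
  -- telescoping sum
  have tele : ∀ n, k₀ ≤ n →
      ∑ k ∈ Finset.Ico k₀ n, (a k - a (k + 1)) = a k₀ - a n := by
    intro n hn
    rw [Finset.sum_Ico_eq_sub _ hn, Finset.sum_range_sub' a, Finset.sum_range_sub' a]
    ring
  -- shifted sums
  have shift : ∀ m, m ≤ k₀ → ∀ n, k₀ ≤ n →
      ∑ k ∈ Finset.Ico k₀ n, d (k - m) ≤ ∑ k ∈ Finset.Ico (k₀ - m) n, d k := by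
    intro m hm n hn
    have h1 : ∑ k ∈ Finset.Ico k₀ n, d (k - m)
        = ∑ i ∈ Finset.range (n - k₀), d (k₀ - m + i) := by
      rw [Finset.sum_Ico_eq_sum_range]
      refine Finset.sum_congr rfl fun i _ => ?_
      congr 1
      omega
    have h2 : ∑ k ∈ Finset.Ico (k₀ - m) (n - m), d k
        = ∑ i ∈ Finset.range (n - k₀), d (k₀ - m + i) := by
      rw [Finset.sum_Ico_eq_sum_range]
      have he : n - m - (k₀ - m) = n - k₀ := by omega
      rw [he]
    rw [h1, ← h2]
    exact Finset.sum_le_sum_of_subset_of_nonneg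
      (Finset.Ico_subset_Ico le_rfl (by omega)) (fun i _ _ => hd0 i)
  have shift1 : ∀ n, k₀ ≤ n →
      ∑ k ∈ Finset.Ico k₀ n, d (k - 1) ≤ d (k₀ - 1) + ∑ k ∈ Finset.Ico k₀ n, d k := by
    intro n hn
    have h := shift 1 (by omega) n hn
    have hsplit : ∑ k ∈ Finset.Ico (k₀ - 1) n, d k
        = d (k₀ - 1) + ∑ k ∈ Finset.Ico k₀ n, d k := by
      rw [Finset.sum_eq_sum_Ico_succ_bot (by omega : k₀ - 1 < n)]
      have he : k₀ - 1 + 1 = k₀ := by omega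
      rw [he]
    linarith [h, hsplit.le, hsplit.ge]
  have shift2 : ∀ n, k₀ ≤ n →
      ∑ k ∈ Finset.Ico k₀ n, d (k - 2)
        ≤ d (k₀ - 2) + d (k₀ - 1) + ∑ k ∈ Finset.Ico k₀ n, d k := by
    intro n hn
    have h := shift 2 (by omega) n hn
    have hsplit : ∑ k ∈ Finset.Ico (k₀ - 2) n, d k
        = d (k₀ - 2) + d (k₀ - 1) + ∑ k ∈ Finset.Ico k₀ n, d k := by
      rw [Finset.sum_eq_sum_Ico_succ_bot (by omega : k₀ - 2 < n)]
      have he : k₀ - 2 + 1 = k₀ - 1 := by omega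
      rw [he]
      rw [Finset.sum_eq_sum_Ico_succ_bot (by omega : k₀ - 1 < n)]
      have he2 : k₀ - 1 + 1 = k₀ := by omega
      rw [he2]
      ring
    linarith [h, hsplit.le]
  -- the uniform bound on tail sums
  set B : ℝ := 2 * (2 * c / ρ * a k₀) + 2 * p * (d (k₀ - 2) + d (k₀ - 1))
      + 2 * q * d (k₀ - 1) with hB
  clear_value B
  have hcρ : (0:ℝ) ≤ 2 * c / ρ := by positivity
  have hTB : ∀ n, ∑ k ∈ Finset.Ico k₀ n, d k ≤ B := by
    intro n
    rcases le_or_gt k₀ n with hn | hn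
    · have hsum : ∑ k ∈ Finset.Ico k₀ n, d k
          ≤ ∑ k ∈ Finset.Ico k₀ n,
              (2 * c / ρ * (a k - a (k + 1)) + (p * d (k - 2) + q * d (k - 1))) :=
        Finset.sum_le_sum (fun k hk => keysum k (Finset.mem_Ico.mp hk).1)
      rw [Finset.sum_add_distrib, Finset.sum_add_distrib, ← Finset.mul_sum,
        ← Finset.mul_sum, ← Finset.mul_sum, tele n hn] at hsum
      have H2 := mul_le_mul_of_nonneg_left (shift2 n hn) hp0
      have H1 := mul_le_mul_of_nonneg_left (shift1 n hn) hq0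
      have hAn := mul_le_mul_of_nonneg_left (sub_le_self (a k₀) (ha0 n)) hcρ
      set T : ℝ := ∑ k ∈ Finset.Ico k₀ n, d k with hT
      clear_value T
      have hhalf : p * T + q * T = 1 / 2 * T := by
        rw [← add_mul, hpq]
      rw [hB]
      nlinarith [hsum, H2, H1, hAn, hhalf]
    · rw [Finset.Ico_eq_empty (by omega), Finset.sum_empty, hB]
      have h1 : 0 ≤ 2 * c / ρ * a k₀ := mul_nonneg hcρ (ha0 k₀)
      have h2 : 0 ≤ p * (d (k₀ - 2) + d (k₀ - 1)) :=
        mul_nonneg hp0 (add_nonneg (hd0 _) (hd0 _))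
      have h3 : 0 ≤ q * d (k₀ - 1) := mul_nonneg hq0 (hd0 _)
      linarith
  have hB0 : 0 ≤ B := by
    have := hTB k₀
    simpa using this
  -- bounded partial sums
  have hC : ∀ n, ∑ k ∈ Finset.range n, d k ≤ (∑ k ∈ Finset.range k₀, d k) + B := by
    intro n
    rcases le_or_gt k₀ n with hn | hn
    · rw [← Finset.sum_range_add_sum_Ico _ hn]
      exact add_le_add_right (hTB n) _
    · have hsub := Finset.sum_le_sum_of_subset_of_nonneg
        (Finset.range_subset_range.mpr hn.le) (fun i _ _ => hd0 i)
      linarith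
  have hsummable : Summable d := summable_of_sum_range_le hd0 hC
  have hcauchy : CauchySeq z := by
    apply cauchySeq_of_summable_dist
    have he : (fun n => dist (z n) (z (n + 1))) = d := by
      funext n
      rw [dist_eq_norm, norm_sub_rev]
      simp only [hd]
    exact he ▸ hsummable
  exact ⟨hsummable, hcauchy, cauchySeq_tendsto_of_complete hcauchy⟩
end
end

section
/- (Local stability of bounded KKT multipliers at a point where the multiplier is unique.) Let x̄ ∈ ℝ^n, r̄ ∈ ℝ^J, and suppose M(x̄, r̄) = {λ̄} is a singleton. Let Λ ⊆ ℝ^J be a bounded set. Then for every ε₁ > 0 there exists ε₂ > 0 such that for every (x, r) ∈ ℝ^n × ℝ^J with ‖(x,r) − (x̄,r̄)‖ ≤ ε₂ and every λ ∈ Λ ∩ M(x,r), one has ‖λ − λ̄‖ ≤ ε₁. -/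
open scoped InnerProductSpace
open Filter Topology

noncomputable section

/-!
Keep the subgradients as unknowns: the KKT system in `((x, r), (λ, u, v))` is then a closed set,
since `l` and the `P i` are continuous. Subgradients of a continuous function are bounded over a
bounded set of points, so for `x` near `x̄` and `λ ∈ Λ` every KKT point `(λ, u, v)` lies in one
compact set `K`. At `(x̄, r̄)` the only KKT multiplier is `λ̄`, so by the tube lemma the KKT
points in `K` over all `(x, r)` close to `(x̄, r̄)` have `λ` within `ε₁` of `λ̄`.
-/

theorem IsClosed.eventually_forall_mem_imp_mem {X Y : Type*} [TopologicalSpace X]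
    [TopologicalSpace Y] {S : Set (X × Y)} (hS : IsClosed S) {K U : Set Y} (hK : IsCompact K)
    (hU : IsOpen U) {x₀ : X} (h : ∀ y ∈ K, (x₀, y) ∈ S → y ∈ U) :
    ∀ᶠ x in 𝓝 x₀, ∀ y ∈ K, (x, y) ∈ S → y ∈ U := by
  have hout : ∀ y ∈ K \ U, (x₀, y) ∉ S := fun y hy hyS => hy.2 (h y hy.1 hyS)
  filter_upwards [(hK.diff hU).eventually_forall_of_forall_eventually (P := fun x y => (x, y) ∉ S)
    fun y hy => hS.isOpen_compl.mem_nhds (hout y hy)] with x hx y hyK hyS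
  by_contra hyU
  exact hx y ⟨hyK, hyU⟩ hyS

theorem dist_prod_le_sqrt {E F : Type*} [SeminormedAddCommGroup E] [SeminormedAddCommGroup F]
    (x x' : E) (y y' : F) : dist (x, y) (x', y') ≤ √(‖x - x'‖ ^ 2 + ‖y - y'‖ ^ 2) := by
  rw [Prod.dist_eq, dist_eq_norm, dist_eq_norm]
  exact max_le (Real.le_sqrt_of_sq_le (by nlinarith)) (Real.le_sqrt_of_sq_le (by nlinarith))

section Subgradient

variable {E : Type*} [NormedAddCommGroup E] [InnerProductSpace ℝ E]

theorem isClosed_setOf_mem_Subgrad {X : Type*} [TopologicalSpace X] {f : E → ℝ}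
    (hf : Continuous f) {x g : X → E} (hx : Continuous x) (hg : Continuous g) :
    IsClosed {a | g a ∈ Subgrad f (x a)} := by
  have hinter : {a | g a ∈ Subgrad f (x a)} =
      ⋂ y, {a | f (x a) + ⟪g a, y - x a⟫_ℝ ≤ f y} :=
    Set.ext fun _ => by simp [Subgrad]
  rw [hinter]
  exact isClosed_iInter fun y => isClosed_le (by fun_prop) continuous_const

theorem norm_le_of_mem_Subgrad {f : E → ℝ} {x g : E} {C : ℝ} (hg : g ∈ Subgrad f x)
    (hC : ∀ y ∈ Metric.closedBall x 1, f y ≤ f x + C) : ‖g‖ ≤ C := by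
  rcases eq_or_ne g 0 with rfl | hg0
  · simpa using hC x (Metric.mem_closedBall_self zero_le_one)
  have hunit : ‖‖g‖⁻¹ • g‖ = 1 := norm_smul_inv_norm hg0
  have hinner : ⟪g, ‖g‖⁻¹ • g⟫_ℝ = ‖g‖ := by
    rw [real_inner_smul_right, real_inner_self_eq_norm_mul_norm,
      inv_mul_cancel_left₀ (norm_ne_zero_iff.2 hg0)]
  have hy := hg (x + ‖g‖⁻¹ • g)
  have hyC := hC (x + ‖g‖⁻¹ • g) (by simp [hunit])
  rw [add_sub_cancel_left, hinner] at hy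
  linarith

theorem Bornology.IsBounded.biUnion_Subgrad [ProperSpace E] {f : E → ℝ} (hf : Continuous f)
    {s : Set E} (hs : Bornology.IsBounded s) :
    Bornology.IsBounded (⋃ x ∈ s, Subgrad f x) := by
  obtain ⟨ρ, hρ⟩ := isBounded_iff_forall_norm_le.1 hs
  obtain ⟨C, hC⟩ := (isCompact_closedBall (0 : E) (ρ + 1)).exists_bound_of_continuousOn
    hf.continuousOn
  refine isBounded_iff_forall_norm_le.2 ⟨2 * C, ?_⟩
  simp only [Set.mem_iUnion]
  rintro g ⟨x, hx, hg⟩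
  have hball : Metric.closedBall x 1 ⊆ Metric.closedBall 0 (ρ + 1) :=
    Metric.closedBall_subset_closedBall' (by simpa [add_comm] using hρ x hx)
  refine norm_le_of_mem_Subgrad hg fun y hy => ?_
  have hfy := abs_le.1 (by simpa using hC y (hball hy))
  have hfx := abs_le.1 (by simpa using hC x (hball (Metric.mem_closedBall_self zero_le_one)))
  linarith

end Subgradient

section KKT

variable {n J : ℕ} {l : Eu n → ℝ} {P : Fin J → Eu n → ℝ}

def kktSet (l : Eu n → ℝ) (P : Fin J → Eu n → ℝ) :
    Set ((Eu n × Eu J) × (Eu J × Eu n × (Fin J → Eu n))) :=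
  {p | (∀ i, 0 ≤ p.2.1 i) ∧ p.2.2.1 ∈ Subgrad l p.1.1 ∧
    (∀ i, p.2.2.2 i ∈ Subgrad (P i) p.1.1) ∧ p.2.2.1 + ∑ i, p.2.1 i • p.2.2.2 i = 0 ∧
    ∀ i, p.2.1 i * (P i p.1.1 - p.1.2 i) = 0}

theorem mem_Mset_iff_exists_mem_kktSet {x : Eu n} {r lam : Eu J} :
    lam ∈ Mset l P x r ↔ ∃ u v, ((x, r), (lam, u, v)) ∈ kktSet l P :=
  ⟨fun ⟨hnn, ⟨u, hu, v, hv, hsum⟩, hcs⟩ => ⟨u, v, hnn, hu, hv, hsum, hcs⟩,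
    fun ⟨u, v, hnn, hu, hv, hsum, hcs⟩ => ⟨hnn, ⟨u, hu, v, hv, hsum⟩, hcs⟩⟩

theorem isClosed_kktSet (hl : Continuous l) (hP : ∀ i, Continuous (P i)) :
    IsClosed (kktSet l P) := by
  simp only [kktSet, Set.ofPred_and, Set.ofPred_forall]
  refine .inter (isClosed_iInter fun i => isClosed_le continuous_const (by fun_prop)) <|
    .inter (isClosed_setOf_mem_Subgrad hl (by fun_prop) (by fun_prop)) <|
    .inter (isClosed_iInter fun i => isClosed_setOf_mem_Subgrad (hP i)
      (by fun_prop) (by fun_prop)) <|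
    .inter (isClosed_eq (by fun_prop) continuous_const) <|
    isClosed_iInter fun i => isClosed_eq ?_ continuous_const
  have := hP i
  fun_prop

theorem isBounded_kktSet_witnesses (hl : Continuous l) (hP : ∀ i, Continuous (P i))
    {s : Set (Eu n)} (hs : Bornology.IsBounded s) {Λ : Set (Eu J)}
    (hΛ : Bornology.IsBounded Λ) :
    Bornology.IsBounded {z | ∃ x ∈ s, ∃ r, z.1 ∈ Λ ∧ ((x, r), z) ∈ kktSet l P} := by
  refine (hΛ.prod ((hs.biUnion_Subgrad hl).prod
    (Bornology.IsBounded.pi fun i => hs.biUnion_Subgrad (hP i)))).subset ?_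
  rintro z ⟨x, hx, r, hzΛ, -, hu, hv, -⟩
  exact ⟨hzΛ, Set.mem_biUnion hx hu, fun i _ => Set.mem_biUnion hx (hv i)⟩

end KKT

theorem stmt13_general {n J : ℕ}
    (l : Eu n → ℝ) (P : Fin J → Eu n → ℝ)
    (hlc : Continuous l)
    (hPc : ∀ i, Continuous (P i))
    (xb : Eu n) (rb : Eu J) (lamb : Eu J)
    (hsingle : Mset l P xb rb = {lamb})
    (Λ : Set (Eu J)) (hΛ : Bornology.IsBounded Λ) :
    ∀ ε₁ > (0 : ℝ), ∃ ε₂ > (0 : ℝ), ∀ (x : Eu n) (r : Eu J),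
      Real.sqrt (‖x - xb‖ ^ 2 + ‖r - rb‖ ^ 2) ≤ ε₂ →
      ∀ lam ∈ Λ ∩ Mset l P x r, ‖lam - lamb‖ ≤ ε₁ := by
  intro ε₁ hε₁
  set B := Metric.closedBall xb 1
  set K := closure {z | ∃ x ∈ B, ∃ r, z.1 ∈ Λ ∧ ((x, r), z) ∈ kktSet l P}
  have hK : IsCompact K :=
    (isBounded_kktSet_witnesses hlc hPc Metric.isBounded_closedBall hΛ).isCompact_closure
  have hcenter : ∀ z ∈ K, ((xb, rb), z) ∈ kktSet l P → ‖z.1 - lamb‖ < ε₁ := by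
    rintro ⟨lam, u, v⟩ - hkkt
    have hlam : lam = lamb := by
      rw [← Set.mem_singleton_iff, ← hsingle]
      exact mem_Mset_iff_exists_mem_kktSet.2 ⟨u, v, hkkt⟩
    simpa [hlam] using hε₁
  have hnear : ∀ᶠ p in 𝓝 (xb, rb), p.1 ∈ B ∧
      ∀ z ∈ K, (p, z) ∈ kktSet l P → ‖z.1 - lamb‖ < ε₁ :=
    ((continuous_fst.tendsto (xb, rb)).eventually (Metric.closedBall_mem_nhds xb one_pos)).and <|
      (isClosed_kktSet hlc hPc).eventually_forall_mem_imp_mem hK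
        (U := {z | ‖z.1 - lamb‖ < ε₁}) (isOpen_lt (by fun_prop) continuous_const) hcenter
  obtain ⟨δ, hδ, hδnear⟩ := Metric.eventually_nhds_iff.1 hnear
  refine ⟨δ / 2, half_pos hδ, fun x r hxr lam ⟨hlamΛ, hlamM⟩ => ?_⟩
  obtain ⟨hxB, hclose⟩ := hδnear ((dist_prod_le_sqrt x xb r rb).trans_lt (by linarith))
  obtain ⟨u, v, hkkt⟩ := mem_Mset_iff_exists_mem_kktSet.1 hlamM
  exact (hclose _ (subset_closure ⟨x, hxB, r, hlamΛ, hkkt⟩) hkkt).le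

theorem stmt13 {n J : ℕ} (hn : 1 ≤ n) (hJ : 1 ≤ J)
    (l : Eu n → ℝ) (P : Fin J → Eu n → ℝ)
    (hlcv : ConvexOn ℝ Set.univ l) (hlc : Continuous l)
    (hPcv : ∀ i, ConvexOn ℝ Set.univ (P i)) (hPc : ∀ i, Continuous (P i))
    (hPnn : ∀ i x, 0 ≤ P i x)
    (xb : Eu n) (rb : Eu J) (lamb : Eu J)
    (hsingle : Mset l P xb rb = {lamb})
    (Λ : Set (Eu J)) (hΛ : Bornology.IsBounded Λ) :
    ∀ ε₁ > (0 : ℝ), ∃ ε₂ > (0 : ℝ), ∀ (x : Eu n) (r : Eu J),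
      Real.sqrt (‖x - xb‖ ^ 2 + ‖r - rb‖ ^ 2) ≤ ε₂ →
      ∀ lam ∈ Λ ∩ Mset l P x r, ‖lam - lamb‖ ≤ ε₁ :=
  stmt13_general l P hlc hPc xb rb lamb hsingle Λ hΛ
end
end
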